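/- Let A be a Poisson algebra with Poisson enveloping algebra (U(A), α, β). Then ξ := α ⊗ α ⊗ β + α ⊗ β ⊗ α + β ⊗ α ⊗ α : A ⊗ A ⊗ A → U(A) ⊗ U(A)^op ⊗ U(A) is a Lie algebra homomorphism, where A ⊗ A ⊗ A carries the Lie bracket {a⊗b⊗c, a'⊗b'⊗c'} = {a,a'}⊗bb'⊗cc' − aa'⊗{b,b'}⊗cc' + aa'⊗bb'⊗{c,c'} and U(A) ⊗ U(A)^op ⊗ U(A) carries the commutator bracket of the tensor product algebra. -/

import Mathlib

open TensorProduct MulOpposite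

noncomputable section

universe u v

variable (k : Type*) [Field k]

section Defs

variable (A : Type u) [CommRing A] [Algebra k A]

abbrev T3 := A ⊗[k] (A ⊗[k] A)

structure IsPoissonBracket (br : A →ₗ[k] A →ₗ[k] A) : Prop where
  self : ∀ a : A, br a a = 0
  jacobi : ∀ a b c : A, br a (br b c) + br b (br c a) + br c (br a b) = 0
  leibniz : ∀ a b c : A, br a (b * c) = br a b * c + b * br a c

/-- `{a⊗b⊗c, a'⊗b'⊗c'} = {a,a'}⊗bb'⊗cc' - aa'⊗{b,b'}⊗cc' + aa'⊗bb'⊗{c,c'}`. -/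
def pbrT3 (br : A →ₗ[k] A →ₗ[k] A) (u v : T3 k A) : T3 k A :=
  TensorProduct.map₂ br
      (TensorProduct.map₂ (LinearMap.mul k A) (LinearMap.mul k A)) u v
    - TensorProduct.map₂ (LinearMap.mul k A)
        (TensorProduct.map₂ br (LinearMap.mul k A)) u v
    + TensorProduct.map₂ (LinearMap.mul k A)
        (TensorProduct.map₂ (LinearMap.mul k A) br) u v

/-- `(U, α, β)` is the Poisson enveloping algebra of the Poisson algebra `(A, br)`:
`α` is an algebra map, `β` a Lie map (for the commutator), they satisfy
`α({a,b}) = [β(a), α(b)]`, `β(ab) = α(a)β(b) + α(b)β(a)`, and the triple is universal. -/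
structure IsPoissonEnveloping (br : A → A → A) (U : Type v) [Ring U] [Algebra k U]
    (α : A →ₐ[k] U) (β : A →ₗ[k] U) : Prop where
  lie : ∀ a b : A, β (br a b) = β a * β b - β b * β a
  cross : ∀ a b : A, α (br a b) = β a * α b - α b * β a
  der : ∀ a b : A, β (a * b) = α a * β b + α b * β a
  univ : ∀ (B : Type (max u v)) [Ring B] [Algebra k B] (γ : A →ₐ[k] B) (δ : A →ₗ[k] B),
    (∀ a b : A, δ (br a b) = δ a * δ b - δ b * δ a) →
    (∀ a b : A, γ (br a b) = δ a * γ b - γ b * δ a) →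
    (∀ a b : A, δ (a * b) = γ a * δ b + γ b * δ a) →
    ∃! h : U →ₐ[k] B, (∀ a : A, h (α a) = γ a) ∧ (∀ a : A, h (β a) = δ a)

end Defs

section Xi

variable (A : Type u) [CommRing A] [Algebra k A]
variable (U : Type v) [Ring U] [Algebra k U]

/-- `ξ = α ⊗ α ⊗ β + α ⊗ β ⊗ α + β ⊗ α ⊗ α : A ⊗ A ⊗ A → U ⊗ Uᵒᵖ ⊗ U`. -/
def xiMap (α : A →ₐ[k] U) (β : A →ₗ[k] U) :
    T3 k A →ₗ[k] U ⊗[k] (Uᵐᵒᵖ ⊗[k] U) :=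
  TensorProduct.map α.toLinearMap
      (TensorProduct.map
        ((opLinearEquiv k : U ≃ₗ[k] Uᵐᵒᵖ).toLinearMap ∘ₗ α.toLinearMap) β)
    + TensorProduct.map α.toLinearMap
        (TensorProduct.map
          ((opLinearEquiv k : U ≃ₗ[k] Uᵐᵒᵖ).toLinearMap ∘ₗ β) α.toLinearMap)
    + TensorProduct.map β
        (TensorProduct.map
          ((opLinearEquiv k : U ≃ₗ[k] Uᵐᵒᵖ).toLinearMap ∘ₗ α.toLinearMap) α.toLinearMap)

end Xi

/-!
Both sides of the identity are `k`-bilinear in `(u, v)`, so it suffices to check it on pure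
tensors `a ⊗ b ⊗ c`, `a' ⊗ b' ⊗ c'`. There it is a normal-form computation in
`U ⊗ Uᵒᵖ ⊗ U`: every `β` is moved to the right of every `α` by
`β x * α y = α y * β x + α {x, y}`, products of `α`'s are merged, `β` of a product is expanded
by the derivation rule and `β {x, y}` by the Lie rule; skew-symmetry of the bracket then makes
the remaining terms cancel.
-/

def commutatorBilin (R : Type*) [CommRing R] (B : Type*) [Ring B] [Algebra R B] :
    B →ₗ[R] B →ₗ[R] B :=
  LinearMap.mul R B - (LinearMap.mul R B).flip

theorem commutatorBilin_apply {R : Type*} [CommRing R] {B : Type*} [Ring B] [Algebra R B]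
    (x y : B) : commutatorBilin R B x y = x * y - y * x :=
  rfl

section Poisson

variable {k}

theorem IsPoissonBracket.skew {A : Type u} [CommRing A] [Algebra k A] {br : A →ₗ[k] A →ₗ[k] A}
    (hbr : IsPoissonBracket k A br) (a b : A) : br b a = -br a b := by
  have h := hbr.self (a + b)
  simp only [map_add, LinearMap.add_apply, hbr.self, zero_add, add_zero] at h
  exact eq_neg_of_add_eq_zero_left h

theorem IsPoissonEnveloping.beta_mul_alpha {A : Type u} [CommRing A] [Algebra k A]
    {br : A → A → A} {U : Type v} [Ring U] [Algebra k U] {α : A →ₐ[k] U} {β : A →ₗ[k] U}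
    (henv : IsPoissonEnveloping k A br U α β) (a b : A) :
    β a * α b = α b * β a + α (br a b) := by
  rw [henv.cross]
  abel

end Poisson

section PureTensors

variable {k} {A : Type u} [CommRing A] [Algebra k A] {U : Type v} [Ring U] [Algebra k U]

def pbrT3Bilin (br : A →ₗ[k] A →ₗ[k] A) : T3 k A →ₗ[k] T3 k A →ₗ[k] T3 k A :=
  LinearMap.mk₂ k (pbrT3 k A br)
    (fun _ _ _ => by simp only [pbrT3, map_add, LinearMap.add_apply]; abel)
    (fun _ _ _ => by simp only [pbrT3, map_smul, LinearMap.smul_apply, smul_sub, smul_add])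
    (fun _ _ _ => by simp only [pbrT3, map_add]; abel)
    (fun _ _ _ => by simp only [pbrT3, map_smul, smul_sub, smul_add])

theorem xiMap_tmul (α : A →ₐ[k] U) (β : A →ₗ[k] U) (a b c : A) :
    xiMap k A U α β (a ⊗ₜ (b ⊗ₜ c)) =
      α a ⊗ₜ (op (α b) ⊗ₜ β c) + α a ⊗ₜ (op (β b) ⊗ₜ α c) + β a ⊗ₜ (op (α b) ⊗ₜ α c) :=
  rfl

theorem pbrT3_tmul (br : A →ₗ[k] A →ₗ[k] A) (a b c a' b' c' : A) :
    pbrT3 k A br (a ⊗ₜ (b ⊗ₜ c)) (a' ⊗ₜ (b' ⊗ₜ c')) =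
      br a a' ⊗ₜ ((b * b') ⊗ₜ (c * c')) - (a * a') ⊗ₜ (br b b' ⊗ₜ (c * c'))
        + (a * a') ⊗ₜ ((b * b') ⊗ₜ br c c') :=
  rfl

theorem xiMap_pbrT3_tmul {br : A →ₗ[k] A →ₗ[k] A} (hbr : IsPoissonBracket k A br)
    {α : A →ₐ[k] U} {β : A →ₗ[k] U} (henv : IsPoissonEnveloping k A (fun a b => br a b) U α β)
    (a b c a' b' c' : A) :
    xiMap k A U α β (pbrT3 k A br (a ⊗ₜ (b ⊗ₜ c)) (a' ⊗ₜ (b' ⊗ₜ c'))) =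
      commutatorBilin k (U ⊗[k] (Uᵐᵒᵖ ⊗[k] U)) (xiMap k A U α β (a ⊗ₜ (b ⊗ₜ c)))
        (xiMap k A U α β (a' ⊗ₜ (b' ⊗ₜ c'))) := by
  rw [commutatorBilin_apply]
  simp only [pbrT3_tmul, map_add, map_sub, xiMap_tmul, add_mul, mul_add,
    Algebra.TensorProduct.tmul_mul_tmul, ← op_mul, ← map_mul, henv.lie, henv.der,
    henv.beta_mul_alpha, hbr.skew a a', hbr.skew b b', hbr.skew c c', mul_comm a' a,
    mul_comm b' b, mul_comm c' c, tmul_add, add_tmul, tmul_sub, sub_tmul, tmul_neg, neg_tmul,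
    map_neg, op_add, op_neg, op_sub]
  abel

end PureTensors

/-- If `(U(A), α, β)` is the Poisson enveloping algebra of a Poisson algebra `A`, then
`ξ = α⊗α⊗β + α⊗β⊗α + β⊗α⊗α : A⊗A⊗A → U(A) ⊗ U(A)ᵒᵖ ⊗ U(A)` is a Lie algebra
homomorphism for the tensor Poisson bracket and the commutator bracket. -/
theorem stmt15 (A : Type u) [CommRing A] [Algebra k A]
    (U : Type v) [Ring U] [Algebra k U]
    (br : A →ₗ[k] A →ₗ[k] A) (hbr : IsPoissonBracket k A br)
    (α : A →ₐ[k] U) (β : A →ₗ[k] U)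
    (henv : IsPoissonEnveloping k A (fun a b => br a b) U α β) :
    ∀ u v : T3 k A,
      xiMap k A U α β (pbrT3 k A br u v) =
        xiMap k A U α β u * xiMap k A U α β v
          - xiMap k A U α β v * xiMap k A U α β u := by
  have key : (pbrT3Bilin br).compr₂ (xiMap k A U α β) =
      (commutatorBilin k (U ⊗[k] (Uᵐᵒᵖ ⊗[k] U))).compl₁₂
        (xiMap k A U α β) (xiMap k A U α β) := by
    ext a b c a' b' c'
    exact xiMap_pbrT3_tmul hbr henv a b c a' b' c'
  intro u v
  exact LinearMap.congr_fun₂ key u v
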